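/- arXiv:1008.2108 — 2 statements merged into one kernel-verified Lean document; each statement's English description precedes it below -/
import Mathlib

section
/- Let A be an action set with partition {A^r, A^l, A^bi}, let a_bi ∈ A^bi and a_r ∈ A^r, and for n ≥ 0 write a_bi^n.t for the n-fold prefixing of t by a_bi. Then for every n ≥ 1, the processes p_n^- = a_bi^n.(a_r.0) and q_n^- = a_bi^n.(a_r.0) + a_bi^n.0 satisfy: it is not the case that p_n^- ≲_CC q_n^-. -/
inductive Proc (A : Type) : Type
  | nil : Proc A
  | pre : A → Proc A → Proc A
  | add : Proc A → Proc A → Proc A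

inductive Step {A : Type} : Proc A → A → Proc A → Prop
  | pre (a : A) (p : Proc A) : Step (.pre a p) a p
  | addL {p : Proc A} {a : A} {p' : Proc A} (q : Proc A) :
      Step p a p' → Step (.add p q) a p'
  | addR {q : Proc A} {a : A} {q' : Proc A} (p : Proc A) :
      Step q a q' → Step (.add p q) a q'

/-- `initials p` is the set `I(p)` of actions that `p` can immediately perform. -/
def initials {A : Type} (p : Proc A) : Set A := {a | ∃ p', Step p a p'}

/-- `{Ar, Al, Abi}` is a partition of the action set `A` (cells may be empty). -/
def IsPartition {A : Type} (Ar Al Abi : Set A) : Prop :=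
  (Ar ∪ Al ∪ Abi = Set.univ) ∧ Disjoint Ar Al ∧ Disjoint Ar Abi ∧ Disjoint Al Abi

/-- Covariant-contravariant simulation w.r.t. covariant actions `Ar`,
contravariant actions `Al` and bivariant actions `Abi`. -/
def IsCCSim {A : Type} (Ar Al Abi : Set A) (S : Proc A → Proc A → Prop) : Prop :=
  ∀ p q, S p q →
    (∀ a ∈ Ar ∪ Abi, ∀ p', Step p a p' → ∃ q', Step q a q' ∧ S p' q') ∧
    (∀ a ∈ Al ∪ Abi, ∀ q', Step q a q' → ∃ p', Step p a p' ∧ S p' q')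

/-- The covariant-contravariant simulation preorder `p ≲_CC q`. -/
def ccLe {A : Type} (Ar Al Abi : Set A) (p q : Proc A) : Prop :=
  ∃ S, IsCCSim Ar Al Abi S ∧ S p q

/-- Covariant-contravariant simulation equivalence `p ≡_CC q`. -/
def ccEq {A : Type} (Ar Al Abi : Set A) (p q : Proc A) : Prop :=
  ccLe Ar Al Abi p q ∧ ccLe Ar Al Abi q p

/-- Conformance simulation. -/
def IsConfSim {A : Type} (R : Proc A → Proc A → Prop) : Prop :=
  ∀ p q, R p q →
    initials p ⊆ initials q ∧
    (∀ a q', Step q a q' → a ∈ initials p → ∃ p', Step p a p' ∧ R p' q')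

/-- The conformance simulation preorder `p ≲_CS q`. -/
def csLe {A : Type} (p q : Proc A) : Prop := ∃ R, IsConfSim R ∧ R p q

/-- Conformance simulation equivalence `p ≡_CS q`. -/
def csEq {A : Type} (p q : Proc A) : Prop := csLe p q ∧ csLe q p

/-- The conformance precongruence `p ⊑_CS q`. -/
def csPre {A : Type} (p q : Proc A) : Prop := csLe p q ∧ initials q ⊆ initials p

/-- Plain simulation. -/
def IsSim {A : Type} (S : Proc A → Proc A → Prop) : Prop :=
  ∀ p q, S p q → ∀ a p', Step p a p' → ∃ q', Step q a q' ∧ S p' q'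

/-- The plain simulation preorder `p ≲_S q`. -/
def simLe {A : Type} (p q : Proc A) : Prop := ∃ S, IsSim S ∧ S p q

/-- Ready simulation. -/
def IsRSim {A : Type} (S : Proc A → Proc A → Prop) : Prop :=
  ∀ p q, S p q → initials p = initials q ∧
    (∀ a p', Step p a p' → ∃ q', Step q a q' ∧ S p' q')

/-- The ready simulation preorder `p ≲_RS q`. -/
def rsLe {A : Type} (p q : Proc A) : Prop := ∃ S, IsRSim S ∧ S p q

/-- Ready conformance simulation: a conformance simulation that additionally
guarantees `I(q) ⊆ I(p)` for all related pairs. -/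
def IsRCSim {A : Type} (R : Proc A → Proc A → Prop) : Prop :=
  IsConfSim R ∧ ∀ p q, R p q → initials q ⊆ initials p

/-- The ready conformance simulation preorder `p ≲_RCS q`. -/
def rcsLe {A : Type} (p q : Proc A) : Prop := ∃ R, IsRCSim R ∧ R p q

/-- Open BCCSP terms (with variables indexed by `ℕ`). -/
inductive Term (A : Type) : Type
  | var : ℕ → Term A
  | nil : Term A
  | pre : A → Term A → Term A
  | add : Term A → Term A → Term A

/-- Closed substitution applied to an open term. -/
def Term.subst {A : Type} (σ : ℕ → Proc A) : Term A → Proc A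
  | .var n => σ n
  | .nil => .nil
  | .pre a t => .pre a (t.subst σ)
  | .add s t => .add (s.subst σ) (t.subst σ)

/-- View a closed process as an (open) term. -/
def Proc.toTerm {A : Type} : Proc A → Term A
  | .nil => .nil
  | .pre a p => .pre a p.toTerm
  | .add p q => .add p.toTerm q.toTerm

/-- Inequational derivability (between closed processes) from a set `E` of
inequations between open terms: the least relation containing all substitution
instances of `E` and closed under reflexivity, transitivity and the congruence
rules for prefixing and `+`. -/
inductive DerivLe {A : Type} (E : Set (Term A × Term A)) : Proc A → Proc A → Prop
  | ax (l r : Term A) (σ : ℕ → Proc A) : (l, r) ∈ E → DerivLe E (l.subst σ) (r.subst σ)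
  | refl (p : Proc A) : DerivLe E p p
  | trans {p q r : Proc A} : DerivLe E p q → DerivLe E q r → DerivLe E p r
  | pre (a : A) {p q : Proc A} : DerivLe E p q → DerivLe E (.pre a p) (.pre a q)
  | add {p q r s : Proc A} : DerivLe E p q → DerivLe E r s → DerivLe E (.add p r) (.add q s)

/-- Equational derivability (between closed processes) from a set `E` of
equations between open terms. -/
inductive DerivEq {A : Type} (E : Set (Term A × Term A)) : Proc A → Proc A → Prop
  | ax (l r : Term A) (σ : ℕ → Proc A) : (l, r) ∈ E → DerivEq E (l.subst σ) (r.subst σ)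
  | refl (p : Proc A) : DerivEq E p p
  | symm {p q : Proc A} : DerivEq E p q → DerivEq E q p
  | trans {p q r : Proc A} : DerivEq E p q → DerivEq E q r → DerivEq E p r
  | pre (a : A) {p q : Proc A} : DerivEq E p q → DerivEq E (.pre a p) (.pre a q)
  | add {p q r s : Proc A} : DerivEq E p q → DerivEq E r s → DerivEq E (.add p r) (.add q s)

/-- Substitution of (possibly open) terms for variables. -/
def Term.substT {A : Type} (σ : ℕ → Term A) : Term A → Term A
  | .var n => σ n
  | .nil => .nil
  | .pre a t => .pre a (t.substT σ)
  | .add s t => .add (s.substT σ) (t.substT σ)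

/-- Equational derivability between open terms from a set `E` of equations. -/
inductive TDerivEq {A : Type} (E : Set (Term A × Term A)) : Term A → Term A → Prop
  | ax (l r : Term A) (σ : ℕ → Term A) : (l, r) ∈ E → TDerivEq E (l.substT σ) (r.substT σ)
  | refl (t : Term A) : TDerivEq E t t
  | symm {s t : Term A} : TDerivEq E s t → TDerivEq E t s
  | trans {s t u : Term A} : TDerivEq E s t → TDerivEq E t u → TDerivEq E s u
  | pre (a : A) {s t : Term A} : TDerivEq E s t → TDerivEq E (.pre a s) (.pre a t)
  | add {s t u v : Term A} : TDerivEq E s t → TDerivEq E u v → TDerivEq E (.add s u) (.add t v)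

/-- The bisimulation axioms B1–B4, as equations. -/
def BEqns (A : Type) : Set (Term A × Term A) :=
  { (.add (.var 0) (.var 1), .add (.var 1) (.var 0)),
    (.add (.add (.var 0) (.var 1)) (.var 2), .add (.var 0) (.add (.var 1) (.var 2))),
    (.add (.var 0) (.var 0), .var 0),
    (.add (.var 0) .nil, .var 0) }

/-- The bisimulation axioms B1–B4, each used as two inequations. -/
def BIneqs (A : Type) : Set (Term A × Term A) := BEqns A ∪ Prod.swap '' BEqns A

/-- `npre a n p` is the `n`-fold prefixing `a.a.···.a.p`. -/
def npre {A : Type} (a : A) : ℕ → Proc A → Proc A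
  | 0, p => p
  | n + 1, p => .pre a (npre a n p)

/-!
Since `abi` is bivariant, the step of `q` into its right summand `abi^(n-1).0` must be matched
by the only `abi`-step of `p`, into `abi^(n-1).(ar.0)`. Peeling off the remaining `abi`-prefixes
the same way leaves `ar.0 ≲_CC 0`, impossible because the covariant `ar` cannot be matched by `0`.
-/

theorem Step.pre_inv {A : Type} {a b : A} {p p' : Proc A} (h : Step (.pre a p) b p') :
    b = a ∧ p' = p := by
  cases h
  exact ⟨rfl, rfl⟩

theorem Step.not_nil {A : Type} {a : A} {p : Proc A} : ¬ Step .nil a p := nofun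

section CovariantContravariant

variable {A : Type} {Ar Al Abi : Set A}

theorem ccLe_isCCSim : IsCCSim Ar Al Abi (ccLe Ar Al Abi) := by
  rintro p q ⟨S, hS, hpq⟩
  obtain ⟨hcov, hcontra⟩ := hS p q hpq
  refine ⟨fun a ha p' hp => ?_, fun a ha q' hq => ?_⟩
  · obtain ⟨q', hq, hS'⟩ := hcov a ha p' hp
    exact ⟨q', hq, S, hS, hS'⟩
  · obtain ⟨p', hp, hS'⟩ := hcontra a ha q' hq
    exact ⟨p', hp, S, hS, hS'⟩

theorem ccLe.exists_step_of_covariant {p q p' : Proc A} {a : A} (h : ccLe Ar Al Abi p q)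
    (ha : a ∈ Ar ∪ Abi) (hp : Step p a p') : ∃ q', Step q a q' ∧ ccLe Ar Al Abi p' q' :=
  (ccLe_isCCSim p q h).1 a ha p' hp

theorem ccLe.exists_step_of_contravariant {p q q' : Proc A} {a : A} (h : ccLe Ar Al Abi p q)
    (ha : a ∈ Al ∪ Abi) (hq : Step q a q') : ∃ p', Step p a p' ∧ ccLe Ar Al Abi p' q' :=
  (ccLe_isCCSim p q h).2 a ha q' hq

theorem not_ccLe_nil_of_step {p p' : Proc A} {a : A} (ha : a ∈ Ar ∪ Abi) (hp : Step p a p') :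
    ¬ ccLe Ar Al Abi p .nil := fun h =>
  let ⟨_, hnil, _⟩ := h.exists_step_of_covariant ha hp
  Step.not_nil hnil

theorem ccLe.of_pre_pre {p q : Proc A} {a : A} (ha : a ∈ Al ∪ Abi)
    (h : ccLe Ar Al Abi (.pre a p) (.pre a q)) : ccLe Ar Al Abi p q := by
  obtain ⟨p', hp, hpq⟩ := h.exists_step_of_contravariant ha (.pre a q)
  rwa [hp.pre_inv.2] at hpq

theorem not_ccLe_npre_pre_npre_nil {a b : A} (ha : a ∈ Ar ∪ Abi) (hb : b ∈ Al ∪ Abi)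
    (p : Proc A) (k : ℕ) : ¬ ccLe Ar Al Abi (npre b k (.pre a p)) (npre b k .nil) := by
  induction k with
  | zero => exact not_ccLe_nil_of_step ha (.pre a p)
  | succ k ih => exact fun h => ih (h.of_pre_pre hb)

end CovariantContravariant

theorem cc_counterexample_unguarded_general {A : Type} (Ar Al Abi : Set A)
    (abi ar : A) (habi : abi ∈ Abi) (har : ar ∈ Ar) (n : ℕ) (hn : 1 ≤ n) :
    ¬ ccLe Ar Al Abi
        (npre abi n (.pre ar .nil))
        (.add (npre abi n (.pre ar .nil)) (npre abi n .nil)) := by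
  obtain ⟨m, rfl⟩ : ∃ m, n = m + 1 := ⟨n - 1, by omega⟩
  intro h
  obtain ⟨p', hp, hle⟩ :=
    h.exists_step_of_contravariant (Or.inr habi) (.addR _ (.pre abi (npre abi m .nil)))
  rw [hp.pre_inv.2] at hle
  exact not_ccLe_npre_pre_npre_nil (Or.inl har) (Or.inr habi) .nil m hle

/-- For `a_bi ∈ A^bi`, `a_r ∈ A^r` and `n ≥ 1`, it is not the case that
`a_bi^n.(a_r.0) ≲_CC a_bi^n.(a_r.0) + a_bi^n.0`. -/
theorem cc_counterexample_unguarded {A : Type} (Ar Al Abi : Set A)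
    (hpart : IsPartition Ar Al Abi)
    (abi ar : A) (habi : abi ∈ Abi) (har : ar ∈ Ar) (n : ℕ) (hn : 1 ≤ n) :
    ¬ ccLe Ar Al Abi
        (npre abi n (.pre ar .nil))
        (.add (npre abi n (.pre ar .nil)) (npre abi n .nil)) :=
  cc_counterexample_unguarded_general Ar Al Abi abi ar habi har n hn
end

section
/- The axiom set A_CS^≡ is sound and complete for conformance simulation equivalence: for all closed BCCSP processes p, q, p ≡_CS q if and only if the equation p = q is equationally derivable from A_CS^≡. -/
/-- The axiom set `A_CS^≡`: B1–B4 together with all closed instances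
`a.p = a.p + a.(p + q)` with `I(p) ∩ I(q) = ∅` and all closed instances
`a.(p + q) = a.(p + q) + a.p` with `I(q) ⊆ I(p)`. -/
def ACSEqns (A : Type) : Set (Term A × Term A) :=
  BEqns A ∪
  { e | ∃ (a : A) (p q : Proc A), initials p ∩ initials q = ∅ ∧
        e = ((Proc.pre a p).toTerm,
             (Proc.add (.pre a p) (.pre a (.add p q))).toTerm) } ∪
  { e | ∃ (a : A) (p q : Proc A), initials q ⊆ initials p ∧
        e = ((Proc.pre a (.add p q)).toTerm,
             (Proc.add (.pre a (.add p q)) (.pre a p)).toTerm) }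

/-!
Soundness: `≡_CS` is a congruence for prefixing and `+`, and every axiom relates
`≡_CS`-equivalent processes. The preorder `≲_CS` alone is not preserved by `+`; what is
preserved is `⊑_CS`, which adds `I(q) ⊆ I(p)`, and `≡_CS` implies it in both directions.

Completeness rests on one derived law: if `r ≲_CS s` then `a.r = a.r + a.s`, by induction on the
depth of `s`. Split `s = s₁ + s₂`, where `s₁` keeps the summands whose action `r` can perform.
Each summand `b.u` of `s₁` is matched by some `r --b--> r'` with `r' ≲_CS u`, so by induction
`b.r'` absorbs `b.u`, hence `r` absorbs it, and `r = r + s₁ =: t`. As `I(t) ∩ I(s₂) = ∅`,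
the first axiom family gives `a.t = a.t + a.(r + s)`; as `I(r) ⊆ I(s)`, the second gives
`a.(r + s) = a.(r + s) + a.s`; together `a.r = a.r + a.s`. If `p ≡_CS q`, the same matching
shows that `p` absorbs `q` and `q` absorbs `p`, so `p = p + q = q`.
-/

variable {A : Type}

notation:50 p " ≈[" E "] " q => DerivEq E p q

section Transitions

theorem step_pre_iff {a b : A} {p t : Proc A} : Step (.pre b p) a t ↔ a = b ∧ t = p := by
  constructor
  · rintro ⟨⟩; exact ⟨rfl, rfl⟩
  · rintro ⟨rfl, rfl⟩; exact .pre _ _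

theorem step_add_iff {a : A} {p q t : Proc A} :
    Step (.add p q) a t ↔ Step p a t ∨ Step q a t := by
  constructor
  · intro h
    cases h with
    | addL _ h => exact .inl h
    | addR _ h => exact .inr h
  · rintro (h | h)
    exacts [.addL q h, .addR p h]

theorem not_step_nil {a : A} {t : Proc A} : ¬ Step .nil a t := nofun

@[simp]
theorem initials_pre (a : A) (p : Proc A) : initials (.pre a p) = {a} := by
  ext b
  simp [initials, step_pre_iff]

@[simp]
theorem initials_add (p q : Proc A) : initials (.add p q) = initials p ∪ initials q := by
  ext b
  simp [initials, step_add_iff, exists_or]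

def Proc.depth : Proc A → ℕ
  | .nil => 0
  | .pre _ p => p.depth + 1
  | .add p q => p.depth + q.depth

theorem Step.depth_lt {p p' : Proc A} {a : A} (h : Step p a p') : p'.depth < p.depth := by
  induction h with
  | pre => simp [Proc.depth]
  | addL _ _ ih => simp only [Proc.depth]; omega
  | addR _ _ ih => simp only [Proc.depth]; omega

open Classical in
noncomputable def Proc.filter (P : A → Prop) : Proc A → Proc A
  | .nil => .nil
  | .pre a p => if P a then .pre a p else .nil
  | .add p q => .add (p.filter P) (q.filter P)

theorem step_filter_iff {P : A → Prop} {s u : Proc A} {b : A} :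
    Step (s.filter P) b u ↔ P b ∧ Step s b u := by
  induction s with
  | nil => simp [Proc.filter, not_step_nil]
  | pre a p =>
    by_cases hPa : P a
    · simp only [Proc.filter, if_pos hPa, step_pre_iff]
      constructor
      · rintro ⟨rfl, rfl⟩; exact ⟨hPa, rfl, rfl⟩
      · exact And.right
    · simp only [Proc.filter, if_neg hPa, step_pre_iff, iff_false_intro not_step_nil,
        false_iff, not_and]
      rintro hPb rfl -
      exact hPa hPb
  | add p q ihp ihq => simp only [Proc.filter, step_add_iff, ihp, ihq, and_or_left]

theorem mem_initials_filter {P : A → Prop} {s : Proc A} {b : A} :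
    b ∈ initials (s.filter P) ↔ P b ∧ b ∈ initials s := by
  simp only [initials, Set.mem_ofPred_eq, step_filter_iff, exists_and_left]

theorem Proc.filter_eq_self {P : A → Prop} {s : Proc A} (h : ∀ b ∈ initials s, P b) :
    s.filter P = s := by
  induction s with
  | nil => rfl
  | pre a p => simp [Proc.filter, h a (by simp)]
  | add p q ihp ihq =>
    simp only [initials_add, Set.mem_union] at h
    simp only [Proc.filter, ihp fun b hb => h b (.inl hb), ihq fun b hb => h b (.inr hb)]

end Transitions

section ConformanceSimulation

theorem isConfSim_csLe : IsConfSim (csLe (A := A)) := by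
  rintro p q ⟨R, hR, hpq⟩
  obtain ⟨hI, hsim⟩ := hR p q hpq
  exact ⟨hI, fun a q' hq ha => (hsim a q' hq ha).imp fun _ => And.imp_right (⟨R, hR, ·⟩)⟩

theorem csLe_iff {p q : Proc A} :
    csLe p q ↔ initials p ⊆ initials q ∧
      ∀ a q', Step q a q' → a ∈ initials p → ∃ p', Step p a p' ∧ csLe p' q' := by
  refine ⟨isConfSim_csLe p q, fun ⟨hI, hsim⟩ => ?_⟩
  refine ⟨fun x y => (x = p ∧ y = q) ∨ csLe x y, ?_, .inl ⟨rfl, rfl⟩⟩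
  rintro x y (⟨rfl, rfl⟩ | hxy)
  · exact ⟨hI, fun a q' hq ha => (hsim a q' hq ha).imp fun _ => And.imp_right .inr⟩
  · obtain ⟨hI', hsim'⟩ := isConfSim_csLe x y hxy
    exact ⟨hI', fun a q' hq ha => (hsim' a q' hq ha).imp fun _ => And.imp_right .inr⟩

theorem csLe.initials_subset {p q : Proc A} (h : csLe p q) : initials p ⊆ initials q :=
  (csLe_iff.mp h).1

theorem csLe_refl (p : Proc A) : csLe p p := by
  refine ⟨Eq, ?_, rfl⟩
  rintro p q rfl
  exact ⟨subset_rfl, fun a q' hq _ => ⟨q', hq, rfl⟩⟩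

theorem csLe.trans {p q r : Proc A} (hpq : csLe p q) (hqr : csLe q r) : csLe p r := by
  refine ⟨fun x z => ∃ y, csLe x y ∧ csLe y z, ?_, q, hpq, hqr⟩
  rintro x z ⟨y, hxy, hyz⟩
  obtain ⟨hIxy, hxy⟩ := csLe_iff.mp hxy
  obtain ⟨hIyz, hyz⟩ := csLe_iff.mp hyz
  refine ⟨hIxy.trans hIyz, fun a z' hz ha => ?_⟩
  obtain ⟨y', hy, hyz'⟩ := hyz a z' hz (hIxy ha)
  obtain ⟨x', hx, hxy'⟩ := hxy a y' hy ha
  exact ⟨x', hx, y', hxy', hyz'⟩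

theorem csLe_of_steps {p q : Proc A} (hI : initials p ⊆ initials q)
    (hstep : ∀ a q', Step q a q' → a ∈ initials p → Step p a q') : csLe p q :=
  csLe_iff.mpr ⟨hI, fun a q' hq ha => ⟨q', hstep a q' hq ha, csLe_refl q'⟩⟩

theorem csLe_pre_add_pre {a : A} {p r s : Proc A} (hr : csLe p r) (hs : csLe p s) :
    csLe (.pre a p) (.add (.pre a r) (.pre a s)) := by
  refine csLe_iff.mpr ⟨by simp, fun b t ht _ => ?_⟩
  rcases step_add_iff.mp ht with ht | ht <;> obtain ⟨rfl, rfl⟩ := step_pre_iff.mp ht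
  exacts [⟨p, .pre b p, hr⟩, ⟨p, .pre b p, hs⟩]

theorem csPre.pre {p q : Proc A} (a : A) (h : csLe p q) : csPre (.pre a p) (.pre a q) := by
  refine ⟨csLe_iff.mpr ⟨by simp, fun b t ht _ => ?_⟩, by simp⟩
  obtain ⟨rfl, rfl⟩ := step_pre_iff.mp ht
  exact ⟨p, .pre b p, h⟩

theorem csPre.add {p q r s : Proc A} (h₁ : csPre p q) (h₂ : csPre r s) :
    csPre (.add p r) (.add q s) := by
  obtain ⟨hpq, hqp⟩ := h₁
  obtain ⟨hrs, hsr⟩ := h₂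
  refine ⟨csLe_iff.mpr ⟨?_, fun b t ht _ => ?_⟩, ?_⟩
  · simpa using Set.union_subset_union hpq.initials_subset hrs.initials_subset
  · rcases step_add_iff.mp ht with ht | ht
    · obtain ⟨p', hp, h⟩ := (csLe_iff.mp hpq).2 b t ht (hqp ⟨t, ht⟩)
      exact ⟨p', .addL r hp, h⟩
    · obtain ⟨r', hr, h⟩ := (csLe_iff.mp hrs).2 b t ht (hsr ⟨t, ht⟩)
      exact ⟨r', .addR p hr, h⟩
  · simpa using Set.union_subset_union hqp hsr

theorem csEq.refl (p : Proc A) : csEq p p := ⟨csLe_refl p, csLe_refl p⟩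

theorem csEq.symm {p q : Proc A} (h : csEq p q) : csEq q p := ⟨h.2, h.1⟩

theorem csEq.trans {p q r : Proc A} (hpq : csEq p q) (hqr : csEq q r) : csEq p r :=
  ⟨hpq.1.trans hqr.1, hqr.2.trans hpq.2⟩

theorem csEq.csPre {p q : Proc A} (h : csEq p q) : csPre p q := ⟨h.1, h.2.initials_subset⟩

theorem csEq.pre {p q : Proc A} (a : A) (h : csEq p q) : csEq (.pre a p) (.pre a q) :=
  ⟨(csPre.pre a h.1).1, (csPre.pre a h.2).1⟩

theorem csEq.add {p q r s : Proc A} (h₁ : csEq p q) (h₂ : csEq r s) :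
    csEq (.add p r) (.add q s) :=
  ⟨(h₁.csPre.add h₂.csPre).1, (h₁.symm.csPre.add h₂.symm.csPre).1⟩

theorem csEq_of_step_iff {p q : Proc A} (h : ∀ a t, Step p a t ↔ Step q a t) : csEq p q := by
  have hI : initials p = initials q := by ext a; simp only [initials, Set.mem_ofPred_eq, h]
  exact ⟨csLe_of_steps hI.le fun a t ht _ => (h a t).mpr ht,
    csLe_of_steps hI.ge fun a t ht _ => (h a t).mp ht⟩

theorem csEq_pre_absorbs_pre_add (a : A) {p q : Proc A}
    (h : initials p ∩ initials q = ∅) :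
    csEq (.pre a p) (.add (.pre a p) (.pre a (.add p q))) := by
  have hp : csLe p (.add p q) := by
    refine csLe_of_steps (by simp) fun b t ht hb => ?_
    refine (step_add_iff.mp ht).resolve_right fun hq => ?_
    exact (Set.eq_empty_iff_forall_notMem.mp h) b ⟨hb, t, hq⟩
  exact ⟨csLe_pre_add_pre (csLe_refl p) hp, csLe_of_steps (by simp) fun _ _ ht _ => .addL _ ht⟩

theorem csEq_pre_add_absorbs_pre (a : A) {p q : Proc A} (h : initials q ⊆ initials p) :
    csEq (.pre a (.add p q)) (.add (.pre a (.add p q)) (.pre a p)) := by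
  have hp : csLe (.add p q) p := csLe_of_steps (by simpa using h) fun _ _ ht _ => .addL q ht
  exact ⟨csLe_pre_add_pre (csLe_refl _) hp, csLe_of_steps (by simp) fun _ _ ht _ => .addL _ ht⟩

end ConformanceSimulation

section Soundness

theorem Term.subst_toTerm (p : Proc A) (σ : ℕ → Proc A) : p.toTerm.subst σ = p := by
  induction p with
  | nil => rfl
  | pre a p ih => simp [Proc.toTerm, Term.subst, ih]
  | add p q ihp ihq => simp [Proc.toTerm, Term.subst, ihp, ihq]

theorem csEq_of_derivEq {E : Set (Term A × Term A)}
    (hE : ∀ e ∈ E, ∀ σ, csEq (e.1.subst σ) (e.2.subst σ)) {p q : Proc A}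
    (h : DerivEq E p q) : csEq p q := by
  induction h with
  | ax l r σ hlr => exact hE _ hlr σ
  | refl p => exact .refl p
  | symm _ ih => exact ih.symm
  | trans _ _ ih₁ ih₂ => exact ih₁.trans ih₂
  | pre a _ ih => exact ih.pre a
  | add _ _ ih₁ ih₂ => exact ih₁.add ih₂

theorem csEq_subst_of_mem_BEqns {e : Term A × Term A} (he : e ∈ BEqns A) (σ : ℕ → Proc A) :
    csEq (e.1.subst σ) (e.2.subst σ) := by
  simp only [BEqns, Set.mem_insert_iff, Set.mem_singleton_iff] at he
  rcases he with rfl | rfl | rfl | rfl <;> refine csEq_of_step_iff fun a t => ?_ <;>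
    simp [Term.subst, step_add_iff, not_step_nil, or_comm, or_assoc]

theorem csEq_subst_of_mem_ACSEqns {e : Term A × Term A} (he : e ∈ ACSEqns A)
    (σ : ℕ → Proc A) : csEq (e.1.subst σ) (e.2.subst σ) := by
  rcases he with (he | ⟨a, p, q, h, rfl⟩) | ⟨a, p, q, h, rfl⟩
  · exact csEq_subst_of_mem_BEqns he σ
  · simpa only [Term.subst_toTerm] using csEq_pre_absorbs_pre_add a h
  · simpa only [Term.subst_toTerm] using csEq_pre_add_absorbs_pre a h

end Soundness

namespace DerivEq

variable {E : Set (Term A × Term A)}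

instance : Trans (DerivEq E) (DerivEq E) (DerivEq E) := ⟨DerivEq.trans⟩

theorem of_toTerm_mem {p q : Proc A} (h : (p.toTerm, q.toTerm) ∈ E) : p ≈[E] q := by
  simpa only [Term.subst_toTerm] using DerivEq.ax _ _ (fun _ => .nil) h

theorem add_comm (hE : BEqns A ⊆ E) (p q : Proc A) : .add p q ≈[E] .add q p :=
  .ax (.add (.var 0) (.var 1)) (.add (.var 1) (.var 0)) (fun n => if n = 0 then p else q)
    (hE (by simp [BEqns]))

theorem add_assoc (hE : BEqns A ⊆ E) (p q r : Proc A) :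
    .add (.add p q) r ≈[E] .add p (.add q r) :=
  .ax (.add (.add (.var 0) (.var 1)) (.var 2)) (.add (.var 0) (.add (.var 1) (.var 2)))
    (fun n => if n = 0 then p else if n = 1 then q else r) (hE (by simp [BEqns]))

theorem add_self (hE : BEqns A ⊆ E) (p : Proc A) : .add p p ≈[E] p :=
  .ax (.add (.var 0) (.var 0)) (.var 0) (fun _ => p) (hE (by simp [BEqns]))

theorem add_nil (hE : BEqns A ⊆ E) (p : Proc A) : .add p .nil ≈[E] p :=
  .ax (.add (.var 0) .nil) (.var 0) (fun _ => p) (hE (by simp [BEqns]))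

theorem add_add_add_comm (hE : BEqns A ⊆ E) (p q r s : Proc A) :
    .add (.add p q) (.add r s) ≈[E] .add (.add p r) (.add q s) :=
  calc .add (.add p q) (.add r s) ≈[E] .add p (.add q (.add r s)) := add_assoc hE _ _ _
    _ ≈[E] .add p (.add (.add q r) s) := .add (.refl p) (add_assoc hE _ _ _).symm
    _ ≈[E] .add p (.add (.add r q) s) := .add (.refl p) (.add (add_comm hE q r) (.refl s))
    _ ≈[E] .add p (.add r (.add q s)) := .add (.refl p) (add_assoc hE _ _ _)
    _ ≈[E] .add (.add p r) (.add q s) := (add_assoc hE _ _ _).symm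

theorem absorbs_pre_of_step (hE : BEqns A ⊆ E) {r : Proc A} {b : A} {r' : Proc A}
    (h : Step r b r') : r ≈[E] .add r (.pre b r') := by
  induction h with
  | pre a p => exact (add_self hE _).symm
  | @addL p a p' q _ ih =>
    calc .add p q ≈[E] .add (.add p (.pre a p')) q := .add ih (.refl q)
      _ ≈[E] .add p (.add (.pre a p') q) := add_assoc hE _ _ _
      _ ≈[E] .add p (.add q (.pre a p')) := .add (.refl p) (add_comm hE _ _)
      _ ≈[E] .add (.add p q) (.pre a p') := (add_assoc hE _ _ _).symm
  | addR p _ ih => exact (DerivEq.add (.refl p) ih).trans (add_assoc hE _ _ _).symm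

theorem absorbs_pre_of_step_of_absorbs (hE : BEqns A ⊆ E) {r r' u : Proc A} {b : A}
    (hr : Step r b r') (h : .pre b r' ≈[E] .add (.pre b r') (.pre b u)) :
    r ≈[E] .add r (.pre b u) :=
  calc r ≈[E] .add r (.pre b r') := absorbs_pre_of_step hE hr
    _ ≈[E] .add r (.add (.pre b r') (.pre b u)) := .add (.refl r) h
    _ ≈[E] .add (.add r (.pre b r')) (.pre b u) := (add_assoc hE _ _ _).symm
    _ ≈[E] .add r (.pre b u) := .add (absorbs_pre_of_step hE hr).symm (.refl _)

theorem absorbs_of_forall_step (hE : BEqns A ⊆ E) {r : Proc A} (t : Proc A)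
    (h : ∀ b u, Step t b u → r ≈[E] .add r (.pre b u)) : r ≈[E] .add r t := by
  induction t with
  | nil => exact (add_nil hE r).symm
  | pre b u _ => exact h b u (.pre b u)
  | add t₁ t₂ ih₁ ih₂ =>
    calc r ≈[E] .add r t₁ := ih₁ fun b u hu => h b u (.addL t₂ hu)
      _ ≈[E] .add (.add r t₂) t₁ :=
        .add (ih₂ fun b u hu => h b u (.addR t₁ hu)) (.refl t₁)
      _ ≈[E] .add r (.add t₁ t₂) :=
        (add_assoc hE _ _ _).trans (.add (.refl r) (add_comm hE _ _))

theorem filter_add_filter_not (hE : BEqns A ⊆ E) (P : A → Prop) (s : Proc A) :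
    s ≈[E] .add (s.filter P) (s.filter (¬ P ·)) := by
  induction s with
  | nil => exact (add_nil hE _).symm
  | pre a p =>
    by_cases hPa : P a
    · simpa [Proc.filter, hPa] using (add_nil hE _).symm
    · simpa [Proc.filter, hPa] using ((add_comm hE _ _).trans (add_nil hE _)).symm
  | add p q ihp ihq => exact (DerivEq.add ihp ihq).trans (add_add_add_comm hE _ _ _ _)

theorem absorbs_filter_of_csLe (hE : BEqns A ⊆ E) {r s : Proc A} (hrs : csLe r s)
    (ih : ∀ b r' u, Step s b u → csLe r' u → .pre b r' ≈[E] .add (.pre b r') (.pre b u)) :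
    r ≈[E] .add r (s.filter (· ∈ initials r)) := by
  refine absorbs_of_forall_step hE _ fun b u hu => ?_
  obtain ⟨hb, hsu⟩ := step_filter_iff.mp hu
  obtain ⟨r', hr, hr'u⟩ := (csLe_iff.mp hrs).2 b u hsu hb
  exact absorbs_pre_of_step_of_absorbs hE hr (ih b r' u hsu hr'u)

end DerivEq

section Completeness

theorem BEqns_subset_ACSEqns : BEqns A ⊆ ACSEqns A := fun _ he => .inl (.inl he)

theorem derivEq_pre_absorbs_pre_add (a : A) {p q : Proc A}
    (h : initials p ∩ initials q = ∅) :
    .pre a p ≈[ACSEqns A] .add (.pre a p) (.pre a (.add p q)) :=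
  .of_toTerm_mem (.inl (.inr ⟨a, p, q, h, rfl⟩))

theorem derivEq_pre_add_absorbs_pre (a : A) {p q : Proc A} (h : initials q ⊆ initials p) :
    .pre a (.add p q) ≈[ACSEqns A] .add (.pre a (.add p q)) (.pre a p) :=
  .of_toTerm_mem (.inr ⟨a, p, q, h, rfl⟩)

theorem derivEq_pre_absorbs_pre_of_csLe {r s : Proc A} (hrs : csLe r s) (a : A) :
    .pre a r ≈[ACSEqns A] .add (.pre a r) (.pre a s) := by
  have hB := BEqns_subset_ACSEqns (A := A)
  set P : A → Prop := (· ∈ initials r)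
  set s₁ := s.filter P
  set s₂ := s.filter (¬ P ·)
  set t := Proc.add r s₁
  have hrt : r ≈[ACSEqns A] t := DerivEq.absorbs_filter_of_csLe hB hrs
    fun b r' u _ hr'u => derivEq_pre_absorbs_pre_of_csLe hr'u b
  have hdisj : initials t ∩ initials s₂ = ∅ := by
    refine Set.eq_empty_iff_forall_notMem.mpr fun b ⟨hbt, hbs₂⟩ => ?_
    refine (mem_initials_filter.mp hbs₂).1 ?_
    simp only [t, initials_add, Set.mem_union] at hbt
    exact hbt.elim id fun hbs₁ => (mem_initials_filter.mp hbs₁).1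
  have hts : .add t s₂ ≈[ACSEqns A] .add s r :=
    calc .add t s₂ ≈[ACSEqns A] .add r (.add s₁ s₂) := DerivEq.add_assoc hB _ _ _
      _ ≈[ACSEqns A] .add r s := .add (.refl r) (DerivEq.filter_add_filter_not hB P s).symm
      _ ≈[ACSEqns A] .add s r := DerivEq.add_comm hB r s
  have hr : .pre a r ≈[ACSEqns A] .add (.pre a t) (.pre a (.add s r)) :=
    calc .pre a r ≈[ACSEqns A] .pre a t := .pre a hrt
      _ ≈[ACSEqns A] .add (.pre a t) (.pre a (.add t s₂)) := derivEq_pre_absorbs_pre_add a hdisj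
      _ ≈[ACSEqns A] .add (.pre a t) (.pre a (.add s r)) := .add (.refl _) (.pre a hts)
  calc .pre a r ≈[ACSEqns A] .add (.pre a t) (.pre a (.add s r)) := hr
    _ ≈[ACSEqns A] .add (.pre a t) (.add (.pre a (.add s r)) (.pre a s)) :=
        .add (.refl _) (derivEq_pre_add_absorbs_pre a hrs.initials_subset)
    _ ≈[ACSEqns A] .add (.add (.pre a t) (.pre a (.add s r))) (.pre a s) :=
        (DerivEq.add_assoc hB _ _ _).symm
    _ ≈[ACSEqns A] .add (.pre a r) (.pre a s) := .add hr.symm (.refl _)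
termination_by s.depth
decreasing_by exact Step.depth_lt ‹_›

theorem derivEq_absorbs_of_csPre {p q : Proc A} (h : csPre p q) : p ≈[ACSEqns A] .add p q := by
  have hq : q.filter (· ∈ initials p) = q := Proc.filter_eq_self h.2
  simpa only [hq] using DerivEq.absorbs_filter_of_csLe BEqns_subset_ACSEqns h.1
    fun b r' u _ hr'u => derivEq_pre_absorbs_pre_of_csLe hr'u b

theorem derivEq_of_csEq {p q : Proc A} (h : csEq p q) : p ≈[ACSEqns A] q :=
  calc p ≈[ACSEqns A] .add p q := derivEq_absorbs_of_csPre h.csPre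
    _ ≈[ACSEqns A] .add q p := DerivEq.add_comm BEqns_subset_ACSEqns p q
    _ ≈[ACSEqns A] q := (derivEq_absorbs_of_csPre h.symm.csPre).symm

end Completeness

/-- `A_CS^≡` is sound and complete for conformance simulation equivalence. -/
theorem ACSEqns_sound_complete {A : Type} (p q : Proc A) :
    csEq p q ↔ DerivEq (ACSEqns A) p q :=
  ⟨derivEq_of_csEq, csEq_of_derivEq fun _ he σ => csEq_subst_of_mem_ACSEqns he σ⟩
end
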